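/- Bound 5: For every natural number k ≥ 1, real p ∈ (0,1], and real q ≥ 1 with p·q > 1, a binomial B(k,p) random variable X̂ satisfies P(k·p/q < X̂ < q·k·p) ≥ 1 − exp(−2·p²·(q−1)²·k) − exp(−2k·(pq−1)²/q²). (Q-error bound from Hoeffding's inequality for uniform sampling with replacement.) -/

import Mathlib

/-!
The event fails only if `X̂ ≤ kp/q` or `X̂ ≥ qkp`, so by the union bound it suffices to bound
the two tails. For the upper tail, Chernoff's bound `P(X̂ ≥ a) ≤ e^{-ta} 𝔼 e^{tX̂}` combined with
Hoeffding's lemma `p e^t + 1 - p ≤ e^{pt + t²/8}` for each Bernoulli factor gives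
`P(X̂ ≥ kp + kε) ≤ e^{-2kε²}`. The lower tail of `B(k,p)` is the upper tail of `B(k,1-p)` under
`i ↦ k - i`. Taking `ε = p(q-1)` and `ε = p - p/q` yields the two exponentials; the second is
weakened using `pq - p ≥ pq - 1 ≥ 0`.
-/

open Classical in
/-- Probability that a binomial B(k,p) random variable satisfies predicate `P`. -/
noncomputable def binomProb (k : ℕ) (p : ℝ) (P : ℕ → Prop) : ℝ :=
  ∑ i ∈ Finset.range (k + 1),
    if P i then (k.choose i : ℝ) * p ^ i * (1 - p) ^ (k - i) else 0

open Real Finset ProbabilityTheory MeasureTheory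

theorem bernoulli_mgf_le_exp {p : ℝ} (hp0 : 0 ≤ p) (hp1 : p ≤ 1) (t : ℝ) :
    p * exp t + (1 - p) ≤ exp (p * t + t ^ 2 / 8) := by
  let μ : Measure ℝ := Ber((1 : ℝ), 0, ⟨p, hp0, hp1⟩)
  have hbdd : ∀ᵐ x ∂μ, id x ∈ Set.Icc (0 : ℝ) 1 :=
    ae_iff.2 <| bernoulliMeasure_apply_of_notMem_of_notMem _ measurableSet_Icc.compl
      (by simp) (by simp)
  have h := (hasSubgaussianMGF_of_mem_Icc aemeasurable_id hbdd).mgf_le t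
  simp only [mgf, μ, integral_bernoulliMeasure, id, smul_eq_mul] at h
  norm_num at h
  have e1 : exp (t * (1 - p)) * exp (p * t) = exp t := by rw [← exp_add]; ring_nf
  have e2 : exp (-(t * p)) * exp (p * t) = 1 := by rw [← exp_add]; simp [mul_comm]
  calc p * exp t + (1 - p)
      = (p * exp (t * (1 - p)) + (1 - p) * exp (-(t * p))) * exp (p * t) := by
        linear_combination -p * e1 - (1 - p) * e2
    _ ≤ exp (t ^ 2 / 8) * exp (p * t) := by
      gcongr
      exact h.trans_eq (by ring_nf)
    _ = exp (p * t + t ^ 2 / 8) := by rw [← exp_add, add_comm]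

theorem sum_choose_mul_exp_eq_pow (k : ℕ) (p t : ℝ) :
    ∑ i ∈ range (k + 1), (k.choose i : ℝ) * p ^ i * (1 - p) ^ (k - i) * exp (t * i)
      = (p * exp t + (1 - p)) ^ k := by
  rw [add_pow]
  refine sum_congr rfl fun i _ => ?_
  rw [mul_pow, mul_comm t, exp_nat_mul]
  ring

section binomProb

variable {k : ℕ} {p : ℝ}

theorem binomProb_add_binomProb_not (P : ℕ → Prop) :
    binomProb k p P + binomProb k p (fun i => ¬ P i) = 1 := by
  classical
  have h := sum_choose_mul_exp_eq_pow k p 0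
  simp only [zero_mul, exp_zero, mul_one, add_sub_cancel, one_pow] at h
  rw [binomProb, binomProb, ← sum_add_distrib]
  refine (sum_congr rfl fun i _ => ?_).trans h
  by_cases hi : P i <;> simp [hi]

theorem choose_mul_pow_mul_pow_nonneg (hp0 : 0 ≤ p) (hp1 : p ≤ 1) (i : ℕ) :
    0 ≤ (k.choose i : ℝ) * p ^ i * (1 - p) ^ (k - i) := by
  have := sub_nonneg.2 hp1
  positivity

theorem binomProb_mono (hp0 : 0 ≤ p) (hp1 : p ≤ 1) {P Q : ℕ → Prop}
    (h : ∀ i ≤ k, P i → Q i) : binomProb k p P ≤ binomProb k p Q := by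
  classical
  refine sum_le_sum fun i hi => ?_
  have := choose_mul_pow_mul_pow_nonneg (k := k) hp0 hp1 i
  have hQ := h i (Nat.lt_succ_iff.1 (mem_range.1 hi))
  split_ifs <;> simp_all

theorem binomProb_or_le (hp0 : 0 ≤ p) (hp1 : p ≤ 1) (P Q : ℕ → Prop) :
    binomProb k p (fun i => P i ∨ Q i) ≤ binomProb k p P + binomProb k p Q := by
  classical
  rw [binomProb, binomProb, binomProb, ← sum_add_distrib]
  refine sum_le_sum fun i _ => ?_
  have := choose_mul_pow_mul_pow_nonneg (k := k) hp0 hp1 i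
  split_ifs <;> simp_all

theorem binomProb_one_sub (P : ℕ → Prop) :
    binomProb k (1 - p) P = binomProb k p (fun i => P (k - i)) := by
  classical
  rw [binomProb, binomProb, ← sum_range_reflect]
  refine sum_congr rfl fun i hi => ?_
  have hik : i ≤ k := Nat.lt_succ_iff.1 (mem_range.1 hi)
  rw [add_tsub_cancel_right, Nat.choose_symm hik, Nat.sub_sub_self hik, sub_sub_cancel,
    mul_right_comm]

theorem binomProb_le_le_exp_mul_pow (hp0 : 0 ≤ p) (hp1 : p ≤ 1) {t : ℝ} (ht : 0 ≤ t) (a : ℝ) :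
    binomProb k p (fun i => a ≤ i) ≤ exp (-(t * a)) * (p * exp t + (1 - p)) ^ k := by
  classical
  rw [← sum_choose_mul_exp_eq_pow, mul_sum]
  refine sum_le_sum fun i _ => ?_
  have hw := choose_mul_pow_mul_pow_nonneg (k := k) hp0 hp1 i
  split_ifs with hai
  · have : 1 ≤ exp (-(t * a)) * exp (t * i) := by
      rw [← exp_add]
      exact one_le_exp (by nlinarith)
    nlinarith
  · positivity

theorem binomProb_add_le_le_exp (hp0 : 0 ≤ p) (hp1 : p ≤ 1) {ε : ℝ} (hε : 0 ≤ ε) :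
    binomProb k p (fun i => k * p + k * ε ≤ i) ≤ exp (-2 * k * ε ^ 2) := by
  -- `t = 4ε` minimises the resulting exponent `-tε + t²/8`.
  calc binomProb k p (fun i => k * p + k * ε ≤ i)
      ≤ exp (-(4 * ε * (k * p + k * ε))) * (p * exp (4 * ε) + (1 - p)) ^ k :=
        binomProb_le_le_exp_mul_pow hp0 hp1 (by positivity) _
    _ ≤ exp (-(4 * ε * (k * p + k * ε))) * exp (p * (4 * ε) + (4 * ε) ^ 2 / 8) ^ k := by
        gcongr
        exact bernoulli_mgf_le_exp hp0 hp1 _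
    _ = exp (-2 * k * ε ^ 2) := by
        rw [← exp_nat_mul, ← exp_add]
        ring_nf

theorem binomProb_le_sub_le_exp (hp0 : 0 ≤ p) (hp1 : p ≤ 1) {ε : ℝ} (hε : 0 ≤ ε) :
    binomProb k p (fun i => i ≤ k * p - k * ε) ≤ exp (-2 * k * ε ^ 2) := by
  calc binomProb k p (fun i => i ≤ k * p - k * ε)
      = binomProb k (1 - p) (fun j => ((k - j : ℕ) : ℝ) ≤ k * p - k * ε) := by
        simpa only [sub_sub_cancel] using
          binomProb_one_sub (k := k) (p := 1 - p) (fun i : ℕ => (i : ℝ) ≤ k * p - k * ε)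
    _ ≤ binomProb k (1 - p) (fun j => k * (1 - p) + k * ε ≤ j) :=
        binomProb_mono (by linarith) (by linarith) fun j hj h => by
          rw [Nat.cast_sub hj] at h
          linarith
    _ ≤ exp (-2 * k * ε ^ 2) := binomProb_add_le_le_exp (by linarith) (by linarith) hε

end binomProb

theorem qerror_bound_hoeffding_general (k : ℕ) (p : ℝ) (hp0 : 0 < p) (hp1 : p ≤ 1)
    (q : ℝ) (hq : 1 ≤ q) (hpq : 1 < p * q) :
    1 - Real.exp (-2 * p ^ 2 * (q - 1) ^ 2 * k)
      - Real.exp (-(2 * k * (p * q - 1) ^ 2) / q ^ 2) ≤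
    binomProb k p (fun i => k * p / q < (i : ℝ) ∧ (i : ℝ) < q * k * p) := by
  have hupper := binomProb_add_le_le_exp (k := k) hp0.le hp1 (ε := p * (q - 1)) (by nlinarith)
  have hlower := binomProb_le_sub_le_exp (k := k) hp0.le hp1 (ε := p - p / q)
    (sub_nonneg.2 (div_le_self hp0.le hq))
  have hlower_exp : exp (-2 * k * (p - p / q) ^ 2) ≤ exp (-(2 * k * (p * q - 1) ^ 2) / q ^ 2) := by
    have hsq : (p * q - 1) ^ 2 ≤ (p * q - p) ^ 2 := by nlinarith
    rw [exp_le_exp]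
    calc -2 * k * (p - p / q) ^ 2 = -(2 * k * (p * q - p) ^ 2 / q ^ 2) := by field_simp
      _ ≤ -(2 * k * (p * q - 1) ^ 2) / q ^ 2 := by rw [neg_div]; gcongr
  have hunion : binomProb k p (fun i => ¬(k * p / q < (i : ℝ) ∧ (i : ℝ) < q * k * p)) ≤
      binomProb k p (fun i => i ≤ k * p - k * (p - p / q)) +
      binomProb k p (fun i => k * p + k * (p * (q - 1)) ≤ i) := by
    refine (binomProb_mono hp0.le hp1 fun i _ hi => ?_).trans (binomProb_or_le hp0.le hp1 _ _)
    rw [not_and_or, not_lt, not_lt] at hi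
    rwa [show k * p - k * (p - p / q) = k * p / q by ring,
      show k * p + k * (p * (q - 1)) = q * k * p by ring]
  have htotal := binomProb_add_binomProb_not (k := k) (p := p)
    (fun i => k * p / q < (i : ℝ) ∧ (i : ℝ) < q * k * p)
  rw [show -2 * (k : ℝ) * (p * (q - 1)) ^ 2 = -2 * p ^ 2 * (q - 1) ^ 2 * k by ring] at hupper
  linarith

theorem qerror_bound_hoeffding (k : ℕ) (hk : 1 ≤ k) (p : ℝ) (hp0 : 0 < p) (hp1 : p ≤ 1)
    (q : ℝ) (hq : 1 ≤ q) (hpq : 1 < p * q) :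
    1 - Real.exp (-2 * p ^ 2 * (q - 1) ^ 2 * k)
      - Real.exp (-(2 * k * (p * q - 1) ^ 2) / q ^ 2) ≤
    binomProb k p (fun i => k * p / q < (i : ℝ) ∧ (i : ℝ) < q * k * p) :=
  qerror_bound_hoeffding_general k p hp0 hp1 q hq hpq
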